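/- Let m and d be positive integers with m ≥ 2. The number of subgroups of ℤ × ℤ of index d that are NOT contained in ℤ × mℤ equals σ(d) − σ(d/m), where σ(d/m) = 0 if m ∤ d. -/

import Mathlib

open AddSubgroup Finset ArithmeticFunction
open scoped ArithmeticFunction.sigma

/-!
A subgroup `L ≤ ℤ²` of finite index `n` has a unique Hermite normal form: it is generated by
`(a, b)` and `(0, c)` with `a * c = n` and `0 ≤ b < c`, where `a ℤ` is the projection of `L` to the
first factor and `c ℤ` its intersection with the second. Hence there are `∑_{c ∣ n} c = σ(n)` such
subgroups. Since `ℤ × mℤ` is the image of the injection `(x, y) ↦ (x, m y)` and has index `m`, its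
subgroups of index `d` are the images of the subgroups of `ℤ²` of index `d / m`, and there are none
when `m ∤ d`.
-/

def hermiteMap (a b c : ℤ) : ℤ × ℤ →+ ℤ × ℤ :=
  AddMonoidHom.mk' (fun p => (a * p.1, b * p.1 + c * p.2)) fun p q => by
    ext <;> simp only [Prod.fst_add, Prod.snd_add] <;> ring

def hermiteLattice (a b c : ℤ) : AddSubgroup (ℤ × ℤ) := (hermiteMap a b c).range

section HermiteLattice

variable {a b c : ℤ}

lemma hermiteMap_apply (s t : ℤ) :
    hermiteMap a b c (s, t) = s • (a, b) + t • ((0 : ℤ), c) := by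
  ext <;> simp [hermiteMap] <;> ring

lemma mem_hermiteLattice {x y : ℤ} :
    (x, y) ∈ hermiteLattice a b c ↔ ∃ s t : ℤ, a * s = x ∧ b * s + c * t = y := by
  simp [hermiteLattice, hermiteMap, Prod.ext_iff]

lemma hermiteLattice_le_iff {L : AddSubgroup (ℤ × ℤ)} :
    hermiteLattice a b c ≤ L ↔ (a, b) ∈ L ∧ ((0 : ℤ), c) ∈ L := by
  refine ⟨fun h => ⟨h ⟨(1, 0), by simp [hermiteMap]⟩, h ⟨(0, 1), by simp [hermiteMap]⟩⟩, ?_⟩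
  rintro ⟨hab, hc⟩ _ ⟨⟨s, t⟩, rfl⟩
  rw [hermiteMap_apply]
  exact add_mem (zsmul_mem hab s) (zsmul_mem hc t)

lemma map_fst_hermiteLattice :
    (hermiteLattice a b c).map (AddMonoidHom.fst ℤ ℤ) = zmultiples a := by
  ext x
  simp [hermiteLattice, hermiteMap, mem_zmultiples_iff, mul_comm]

lemma comap_inr_hermiteLattice (ha : a ≠ 0) :
    (hermiteLattice a b c).comap (AddMonoidHom.inr ℤ ℤ) = zmultiples c := by
  ext y
  simp [mem_hermiteLattice, ha, mem_zmultiples_iff, mul_comm]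

lemma hermiteLattice_zero :
    hermiteLattice a 0 c = (zmultiples a).prod (zmultiples c) := by
  ext ⟨x, y⟩
  simp [mem_hermiteLattice, mem_prod, mem_zmultiples_iff, mul_comm]

lemma hermiteMap_injective (ha : a ≠ 0) (hc : c ≠ 0) : Function.Injective (hermiteMap a b c) := by
  rintro ⟨s, t⟩ ⟨s', t'⟩ h
  simp only [hermiteMap, AddMonoidHom.mk'_apply, Prod.mk.injEq] at h
  obtain rfl : s = s' := mul_left_cancel₀ ha h.1
  simpa using mul_left_cancel₀ hc (add_left_cancel h.2)

lemma hermiteMap_shear_bijective (b : ℤ) : Function.Bijective (hermiteMap 1 b 1) :=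
  ⟨hermiteMap_injective one_ne_zero one_ne_zero, fun p =>
    ⟨(p.1, p.2 - b * p.1), by ext <;> simp [hermiteMap]⟩⟩

lemma hermiteMap_eq_comp :
    hermiteMap a b c = ((hermiteMap a 0 1).comp (hermiteMap 1 b 1)).comp (hermiteMap 1 0 c) := by
  ext ⟨s, t⟩ <;> simp [hermiteMap]

lemma index_hermiteLattice (ha : a ≠ 0) :
    (hermiteLattice a b c).index = a.natAbs * c.natAbs := by
  rw [hermiteLattice, hermiteMap_eq_comp, ← AddMonoidHom.map_range, ← AddSubgroup.map_map,
    index_map_of_injective _ (hermiteMap_injective ha one_ne_zero),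
    index_map_of_bijective (hermiteMap_shear_bijective b)]
  change (hermiteLattice 1 0 c).index * (hermiteLattice a 0 1).index = _
  simp [hermiteLattice_zero, index_prod, Int.index_zmultiples, mul_comm]

lemma le_hermiteLattice {L : AddSubgroup (ℤ × ℤ)}
    (hfst : L.map (AddMonoidHom.fst ℤ ℤ) ≤ zmultiples a) (hab : (a, b) ∈ L)
    (hinr : L.comap (AddMonoidHom.inr ℤ ℤ) ≤ zmultiples c) : L ≤ hermiteLattice a b c := by
  rintro ⟨x, y⟩ hxy
  obtain ⟨s, rfl⟩ := mem_zmultiples_iff.mp (hfst ⟨_, hxy, rfl⟩)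
  have hslice : ((0 : ℤ), y - s * b) ∈ L := by
    convert sub_mem hxy (zsmul_mem hab s) using 1
    simp
  obtain ⟨t, ht⟩ := mem_zmultiples_iff.mp (hinr hslice)
  refine mem_hermiteLattice.mpr ⟨s, t, by simp [mul_comm], ?_⟩
  simp only [smul_eq_mul] at ht ⊢
  linarith

end HermiteLattice

lemma eq_of_zmultiples_natCast_eq {m n : ℕ} (h : zmultiples (m : ℤ) = zmultiples (n : ℤ)) :
    m = n := by
  simpa using congrArg index h

lemma hermiteLattice_inj {a b c a' b' c' : ℕ} (ha : 0 < a) (hb : b < c) (hb' : b' < c')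
    (h : hermiteLattice a b c = hermiteLattice a' b' c') : a = a' ∧ b = b' ∧ c = c' := by
  have ha_eq : a = a' := eq_of_zmultiples_natCast_eq <| by
    simpa only [map_fst_hermiteLattice] using congrArg (map (AddMonoidHom.fst ℤ ℤ)) h
  subst ha_eq
  have hc_eq : c = c' := eq_of_zmultiples_natCast_eq <| by
    simpa only [comap_inr_hermiteLattice (Int.natCast_ne_zero.mpr ha.ne')]
      using congrArg (comap (AddMonoidHom.inr ℤ ℤ)) h
  subst hc_eq
  refine ⟨rfl, ?_, rfl⟩
  have hgen (b₀ : ℕ) : ((a : ℤ), (b₀ : ℤ)) ∈ hermiteLattice a b₀ c :=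
    (hermiteLattice_le_iff.mp le_rfl).1
  have hb'_mem : ((a : ℤ), (b' : ℤ)) ∈ hermiteLattice a b c := h ▸ hgen b'
  have hdiff : (b' : ℤ) - b ∈ (hermiteLattice a b c).comap (AddMonoidHom.inr ℤ ℤ) := by
    convert sub_mem hb'_mem (hgen b) using 1
    simp
  rw [comap_inr_hermiteLattice (Int.natCast_ne_zero.mpr ha.ne'), Int.mem_zmultiples_iff] at hdiff
  exact (Nat.modEq_iff_dvd.mpr hdiff).eq_of_lt_of_lt hb hb'

lemma Int.exists_addSubgroup_eq_zmultiples_natCast (H : AddSubgroup ℤ) :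
    ∃ n : ℕ, H = zmultiples (n : ℤ) := by
  obtain ⟨α, hα⟩ := Int.subgroup_cyclic H
  exact ⟨α.natAbs, by rw [hα, Int.zmultiples_natAbs, zmultiples_eq_closure]⟩

lemma exists_hermiteLattice_eq {L : AddSubgroup (ℤ × ℤ)} (hL : L.index ≠ 0) :
    ∃ a b c : ℕ, 0 < a ∧ b < c ∧ L = hermiteLattice a b c := by
  obtain ⟨a, ha⟩ := Int.exists_addSubgroup_eq_zmultiples_natCast (L.map (AddMonoidHom.fst ℤ ℤ))
  obtain ⟨c, hc⟩ := Int.exists_addSubgroup_eq_zmultiples_natCast (L.comap (AddMonoidHom.inr ℤ ℤ))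
  have hindex_fst : (L.index : ℤ) ∈ zmultiples (a : ℤ) :=
    ha ▸ ⟨_, nsmul_index_mem L (1, 0), by simp⟩
  have hindex_snd : (L.index : ℤ) ∈ zmultiples (c : ℤ) :=
    hc ▸ by simpa using nsmul_index_mem L (0, 1)
  have ha0 : 0 < a := Nat.pos_of_ne_zero fun h0 => hL (by simpa [h0] using hindex_fst)
  have hc0 : 0 < c := Nat.pos_of_ne_zero fun h0 => hL (by simpa [h0] using hindex_snd)
  obtain ⟨⟨x, y₀⟩, hy₀, rfl : x = a⟩ := ha ▸ mem_zmultiples (a : ℤ)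
  obtain ⟨b, hb⟩ := Int.eq_ofNat_of_zero_le (Int.emod_nonneg y₀ (Int.natCast_ne_zero.mpr hc0.ne'))
  have hc_mem : ((0 : ℤ), (c : ℤ)) ∈ L := (hc ▸ mem_zmultiples (c : ℤ) :)
  have hab : ((a : ℤ), (b : ℤ)) ∈ L := by
    convert sub_mem hy₀ (zsmul_mem hc_mem (y₀ / c)) using 1
    simp [← hb, Int.emod_def, mul_comm]
  have hbc : b < c := by
    have := Int.emod_lt_of_pos y₀ (Int.natCast_pos.mpr hc0)
    omega
  refine ⟨a, b, c, ha0, hbc, le_antisymm (le_hermiteLattice ha.le hab hc.le) ?_⟩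
  exact hermiteLattice_le_iff.mpr ⟨hab, hc_mem⟩

lemma index_hermiteLattice_natCast {a b c : ℕ} (ha : 0 < a) :
    (hermiteLattice a b c).index = a * c := by
  simpa using index_hermiteLattice (b := (b : ℤ)) (c := (c : ℤ)) (Int.natCast_ne_zero.mpr ha.ne')

def hermiteTriples (n : ℕ) : Finset (Σ _ : ℕ × ℕ, ℕ) :=
  n.divisorsAntidiagonal.sigma fun p => range p.2

lemma card_hermiteTriples (n : ℕ) : #(hermiteTriples n) = σ 1 n := by
  rw [hermiteTriples, card_sigma, sigma_one_apply]
  simpa using Nat.sum_divisorsAntidiagonal' (fun _ c => c)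

lemma setOf_index_eq {n : ℕ} (hn : n ≠ 0) :
    {L : AddSubgroup (ℤ × ℤ) | L.index = n} =
      (fun x : Σ _ : ℕ × ℕ, ℕ => hermiteLattice x.1.1 x.2 x.1.2) '' hermiteTriples n := by
  ext L
  simp only [Set.mem_ofPred_eq, Set.mem_image, hermiteTriples, coe_sigma, Set.mem_sigma_iff,
    mem_coe, Nat.mem_divisorsAntidiagonal, mem_range, Sigma.exists]
  constructor
  · rintro rfl
    obtain ⟨a, b, c, ha, hbc, rfl⟩ := exists_hermiteLattice_eq hn
    exact ⟨(a, c), b, ⟨⟨(index_hermiteLattice_natCast ha).symm, hn⟩, hbc⟩, rfl⟩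
  · rintro ⟨⟨a, c⟩, b, ⟨⟨rfl, hn⟩, -⟩, rfl⟩
    exact index_hermiteLattice_natCast (Nat.pos_of_ne_zero (left_ne_zero_of_mul hn))

lemma ncard_setOf_index_eq {n : ℕ} (hn : n ≠ 0) :
    {L : AddSubgroup (ℤ × ℤ) | L.index = n}.ncard = σ 1 n := by
  rw [setOf_index_eq hn, Set.InjOn.ncard_image, Set.ncard_coe_finset, card_hermiteTriples]
  rintro ⟨⟨a, c⟩, b⟩ hx ⟨⟨a', c'⟩, b'⟩ hx' h
  simp only [hermiteTriples, coe_sigma, Set.mem_sigma_iff, mem_coe,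
    Nat.mem_divisorsAntidiagonal, mem_range] at hx hx'
  have ha : 0 < a := Nat.pos_of_ne_zero (left_ne_zero_of_mul (hx.1.1 ▸ hx.1.2))
  obtain ⟨rfl, rfl, rfl⟩ := hermiteLattice_inj ha hx.2 hx'.2 h
  rfl

lemma finite_setOf_index_eq {n : ℕ} (hn : n ≠ 0) :
    {L : AddSubgroup (ℤ × ℤ) | L.index = n}.Finite :=
  setOf_index_eq hn ▸ (hermiteTriples n).finite_toSet.image _

lemma AddSubgroup.ncard_setOf_index_eq_and_le_range {G G' : Type*} [AddGroup G] [AddGroup G']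
    {f : G →+ G'} (hf : Function.Injective f) (d : ℕ) :
    {L : AddSubgroup G' | L.index = d ∧ L ≤ f.range}.ncard =
      {H : AddSubgroup G | H.index * f.range.index = d}.ncard := by
  rw [← Set.ncard_image_of_injective _ (map_injective hf)]
  congr 1
  ext L
  constructor
  · rintro ⟨hL, hle⟩
    refine ⟨L.comap f, ?_, map_comap_eq_self hle⟩
    rw [Set.mem_ofPred_eq, ← index_map_of_injective _ hf, map_comap_eq_self hle, hL]
  · rintro ⟨H, hH, rfl⟩
    exact ⟨(index_map_of_injective _ hf).trans hH, map_le_range f H⟩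

lemma ncard_setOf_index_eq_and_le_prod_zmultiples (m : ℕ) {d : ℕ} (hd : d ≠ 0) :
    {L : AddSubgroup (ℤ × ℤ) |
        L.index = d ∧ L ≤ (⊤ : AddSubgroup ℤ).prod (zmultiples (m : ℤ))}.ncard =
      if m ∣ d then σ 1 (d / m) else 0 := by
  have hP : (⊤ : AddSubgroup ℤ).prod (zmultiples (m : ℤ)) = (hermiteMap 1 0 m).range := by
    rw [← hermiteLattice, hermiteLattice_zero, Int.zmultiples_one]
  split_ifs with hmd
  · obtain ⟨k, rfl⟩ := hmd
    have hm : m ≠ 0 := left_ne_zero_of_mul hd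
    rw [hP, AddSubgroup.ncard_setOf_index_eq_and_le_range (hermiteMap_injective one_ne_zero
      (Int.natCast_ne_zero.mpr hm)), ← hermiteLattice, index_hermiteLattice one_ne_zero,
      Nat.mul_div_cancel_left _ (Nat.pos_of_ne_zero hm),
      ← ncard_setOf_index_eq (right_ne_zero_of_mul hd)]
    simp [mul_comm, hm]
  · convert Set.ncard_empty (AddSubgroup (ℤ × ℤ))
    refine Set.eq_empty_of_forall_notMem fun L ⟨hL, hle⟩ => hmd ?_
    simpa [hL, index_prod] using index_dvd_of_le hle

theorem stmt5_general (m d : ℕ) (hd : 0 < d) :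
    Nat.card {L : AddSubgroup (ℤ × ℤ) // L.index = d ∧
        ¬ L ≤ (⊤ : AddSubgroup ℤ).prod (AddSubgroup.zmultiples (m : ℤ))}
      = (∑ k ∈ d.divisors, k) - (if m ∣ d then ∑ k ∈ (d / m).divisors, k else 0) := by
  rw [← sigma_one_apply, ← sigma_one_apply, ← ncard_setOf_index_eq hd.ne',
    ← ncard_setOf_index_eq_and_le_prod_zmultiples m hd.ne']
  exact Nat.eq_sub_of_add_eq'
    (Set.ncard_inter_add_ncard_sdiff_eq_ncard _ _ (finite_setOf_index_eq hd.ne'))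

/-- The number of subgroups of `ℤ × ℤ` of index `d` NOT contained in `ℤ × mℤ` equals
`σ(d) − σ(d/m)`, with `σ(d/m) = 0` if `m ∤ d`. -/
theorem stmt5 (m d : ℕ) (hm : 2 ≤ m) (hd : 0 < d) :
    Nat.card {L : AddSubgroup (ℤ × ℤ) // L.index = d ∧
        ¬ L ≤ (⊤ : AddSubgroup ℤ).prod (AddSubgroup.zmultiples (m : ℤ))}
      = (∑ k ∈ d.divisors, k) - (if m ∣ d then ∑ k ∈ (d / m).divisors, k else 0) :=
  stmt5_general m d hd
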